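/- Let n ≥ 3 and let ĝ_{ab} be a smooth pseudo-Riemannian metric on U with Levi-Civita connection Γ. Then the projective Weyl tensor Ŵ^a_{bcd} of Γ equals the metric (conformal) Weyl tensor LCW^a_{bcd} at every point of U if and only if the Ricci tensor R_{ef} of ĝ satisfies Σ_{e,f} M_{abcd}^{ef} R_{ef} = 0 for all a, b, c, d, where M_{abcd}^{ef} = ĝ_{ac} δ^e_d δ^f_b − ĝ_{ad} δ^e_c δ^f_b + ĝ_{ad} ĝ_{cb} ĝ^{ef} − ĝ_{ac} ĝ_{db} ĝ^{ef} + (n−1)(ĝ_{bd} δ^e_a δ^f_c − ĝ_{bc} δ^e_a δ^f_d). -/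

import Mathlib

open scoped BigOperators

noncomputable section

/-- Partial derivative of `f` in the `b`-th coordinate direction at `x`. -/
def pd {n : ℕ} (b : Fin n) (f : (Fin n → ℝ) → ℝ) (x : Fin n → ℝ) : ℝ :=
  fderiv ℝ f x (Pi.single b 1)

/-- Kronecker delta. -/
def kd {n : ℕ} (a b : Fin n) : ℝ := if a = b then 1 else 0

/-- A torsion-free affine connection on `U`, given by smooth coefficients `Γ^a_{bc}`,
symmetric in the lower indices. -/
def IsConn {n : ℕ} (U : Set (Fin n → ℝ))
    (Γ : Fin n → Fin n → Fin n → (Fin n → ℝ) → ℝ) : Prop :=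
  (∀ a b c, ContDiffOn ℝ (⊤ : ℕ∞) (Γ a b c) U) ∧
  (∀ a b c, ∀ x ∈ U, Γ a b c x = Γ a c b x)

/-- Curvature tensor `R^a_{bcd}` of the connection `Γ`. -/
def curv {n : ℕ} (Γ : Fin n → Fin n → Fin n → (Fin n → ℝ) → ℝ)
    (a b c d : Fin n) (x : Fin n → ℝ) : ℝ :=
  pd c (Γ a b d) x - pd d (Γ a b c) x
    + ∑ e, (Γ a e c x * Γ e b d x - Γ a e d x * Γ e b c x)

/-- Ricci tensor `R_{bd} = Σ_a R^a_{bad}`. -/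
def ricci {n : ℕ} (Γ : Fin n → Fin n → Fin n → (Fin n → ℝ) → ℝ)
    (b d : Fin n) (x : Fin n → ℝ) : ℝ :=
  ∑ a, curv Γ a b a d x

/-- Projective Schouten tensor `P_{ab} = (1/(n-1)) R_{(ab)} - (1/(n+1)) R_{[ab]}`. -/
def schouten {n : ℕ} (Γ : Fin n → Fin n → Fin n → (Fin n → ℝ) → ℝ)
    (a b : Fin n) (x : Fin n → ℝ) : ℝ :=
  (1/((n : ℝ) - 1)) * ((ricci Γ a b x + ricci Γ b a x)/2)
    - (1/((n : ℝ) + 1)) * ((ricci Γ a b x - ricci Γ b a x)/2)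

/-- Projective Weyl tensor
`W^a_{bcd} = R^a_{bcd} - δ^a_c P_{db} + δ^a_d P_{cb} + 2 δ^a_b P_{[cd]}`. -/
def weyl {n : ℕ} (Γ : Fin n → Fin n → Fin n → (Fin n → ℝ) → ℝ)
    (a b c d : Fin n) (x : Fin n → ℝ) : ℝ :=
  curv Γ a b c d x - kd a c * schouten Γ d b x + kd a d * schouten Γ c b x
    + 2 * kd a b * ((schouten Γ c d x - schouten Γ d c x)/2)

/-- Covariant derivative `∇_a P_{bc}` of the projective Schouten tensor. -/
def covSchouten {n : ℕ} (Γ : Fin n → Fin n → Fin n → (Fin n → ℝ) → ℝ)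
    (a b c : Fin n) (x : Fin n → ℝ) : ℝ :=
  pd a (schouten Γ b c) x - (∑ e, Γ e b a x * schouten Γ e c x)
    - (∑ e, Γ e c a x * schouten Γ b e x)

/-- Projective Cotton tensor `Y_{bca} = ∇_b P_{ca} - ∇_c P_{ba}`. -/
def cotton {n : ℕ} (Γ : Fin n → Fin n → Fin n → (Fin n → ℝ) → ℝ)
    (b c a : Fin n) (x : Fin n → ℝ) : ℝ :=
  covSchouten Γ b c a x - covSchouten Γ c b a x

/-- Covariant derivative `∇_e W^a_{bcd}` of the projective Weyl tensor. -/
def covWeyl {n : ℕ} (Γ : Fin n → Fin n → Fin n → (Fin n → ℝ) → ℝ)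
    (e a b c d : Fin n) (x : Fin n → ℝ) : ℝ :=
  pd e (weyl Γ a b c d) x + (∑ f, Γ a f e x * weyl Γ f b c d x)
    - (∑ f, Γ f b e x * weyl Γ a f c d x)
    - (∑ f, Γ f c e x * weyl Γ a b f d x)
    - (∑ f, Γ f d e x * weyl Γ a b c f x)

/-- Covariant derivative `∇_a Y_{bcd}` of the projective Cotton tensor. -/
def covCotton {n : ℕ} (Γ : Fin n → Fin n → Fin n → (Fin n → ℝ) → ℝ)
    (a b c d : Fin n) (x : Fin n → ℝ) : ℝ :=
  pd a (cotton Γ b c d) x - (∑ e, Γ e b a x * cotton Γ e c d x)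
    - (∑ e, Γ e c a x * cotton Γ b e d x)
    - (∑ e, Γ e d a x * cotton Γ b c e x)

/-- Covariant derivative `∇_a A_b` of a 1-form `A`. -/
def cov1 {n : ℕ} (Γ : Fin n → Fin n → Fin n → (Fin n → ℝ) → ℝ)
    (a b : Fin n) (A : Fin n → (Fin n → ℝ) → ℝ) (x : Fin n → ℝ) : ℝ :=
  pd a (A b) x - ∑ e, Γ e b a x * A e x

/-- Covariant derivative `∇_c g^{ab}` of a (2,0)-tensor `g`. -/
def covUp2 {n : ℕ} (Γ : Fin n → Fin n → Fin n → (Fin n → ℝ) → ℝ)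
    (c a b : Fin n) (g : Fin n → Fin n → (Fin n → ℝ) → ℝ) (x : Fin n → ℝ) : ℝ :=
  pd c (g a b) x + (∑ e, Γ a e c x * g e b x) + (∑ e, Γ b e c x * g a e x)

/-- Covariant derivative `∇_a μ^b` of a vector field `μ`. -/
def covVec {n : ℕ} (Γ : Fin n → Fin n → Fin n → (Fin n → ℝ) → ℝ)
    (a b : Fin n) (μ : Fin n → (Fin n → ℝ) → ℝ) (x : Fin n → ℝ) : ℝ :=
  pd a (μ b) x + ∑ e, Γ b e a x * μ e x

/-- A smooth pseudo-Riemannian metric on `U`: smooth, symmetric, and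
nondegenerate at every point of `U`. -/
def IsMetric {n : ℕ} (U : Set (Fin n → ℝ))
    (g : Fin n → Fin n → (Fin n → ℝ) → ℝ) : Prop :=
  (∀ a b, ContDiffOn ℝ (⊤ : ℕ∞) (g a b) U) ∧
  (∀ a b, ∀ x ∈ U, g a b x = g b a x) ∧
  (∀ x ∈ U, (Matrix.of fun a b => g a b x).det ≠ 0)

/-- Pointwise inverse `g^{ab}` of a metric (or pointwise matrix inverse of any
2-index field). -/
def minv {n : ℕ} (g : Fin n → Fin n → (Fin n → ℝ) → ℝ)
    (a b : Fin n) (x : Fin n → ℝ) : ℝ :=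
  (Matrix.of fun i j => g i j x)⁻¹ a b

/-- Levi-Civita connection coefficients
`Γ^a_{bc} = ½ Σ_d g^{ad}(∂_b g_{dc} + ∂_c g_{bd} - ∂_d g_{bc})` of a metric `g`. -/
def levicivita {n : ℕ} (g : Fin n → Fin n → (Fin n → ℝ) → ℝ)
    (a b c : Fin n) (x : Fin n → ℝ) : ℝ :=
  (1/2) * ∑ d, minv g a d x * (pd b (g d c) x + pd c (g b d) x - pd d (g b c) x)

/-- Ricci scalar `R = Σ_{a,b} g^{ab} R_{ab}` of a metric `g`. -/
def ricciScalar {n : ℕ} (g : Fin n → Fin n → (Fin n → ℝ) → ℝ)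
    (x : Fin n → ℝ) : ℝ :=
  ∑ a, ∑ b, minv g a b x * ricci (levicivita g) a b x

/-- Metric Schouten tensor `LCP_{ab} = (1/(n-2))(R_{ab} - R g_{ab}/(2(n-1)))`. -/
def lcSchouten {n : ℕ} (g : Fin n → Fin n → (Fin n → ℝ) → ℝ)
    (a b : Fin n) (x : Fin n → ℝ) : ℝ :=
  (1/((n : ℝ) - 2)) *
    (ricci (levicivita g) a b x - ricciScalar g x * g a b x / (2*((n : ℝ) - 1)))

/-- Metric (conformal) Weyl tensor of a metric `g`. -/
def lcWeyl {n : ℕ} (g : Fin n → Fin n → (Fin n → ℝ) → ℝ)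
    (a b c d : Fin n) (x : Fin n → ℝ) : ℝ :=
  curv (levicivita g) a b c d x - kd a c * lcSchouten g d b x
    + kd a d * lcSchouten g c b x
    - (∑ e, g b d x * minv g a e x * lcSchouten g e c x)
    + (∑ e, g b c x * minv g a e x * lcSchouten g e d x)

/-- `Γ'` is projectively equivalent to `Γ` on `U`:
`Γ'^a_{bc} = Γ^a_{bc} + δ^a_c A_b + δ^a_b A_c` for some smooth 1-form `A`. -/
def ProjEquiv {n : ℕ} (U : Set (Fin n → ℝ))
    (Γ' Γ : Fin n → Fin n → Fin n → (Fin n → ℝ) → ℝ) : Prop :=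
  ∃ A : Fin n → (Fin n → ℝ) → ℝ, (∀ a, ContDiffOn ℝ (⊤ : ℕ∞) (A a) U) ∧
    ∀ a b c, ∀ x ∈ U, Γ' a b c x = Γ a b c x + kd a c * A b x + kd a b * A c x

/-- A connection is special on `U` if its projective Schouten tensor is symmetric. -/
def IsSpecial {n : ℕ} (U : Set (Fin n → ℝ))
    (Γ : Fin n → Fin n → Fin n → (Fin n → ℝ) → ℝ) : Prop :=
  ∀ a b, ∀ x ∈ U, schouten Γ a b x = schouten Γ b a x

/-- A smooth symmetric (2,0)-tensor field on `U`. -/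
def SmoothSym2 {n : ℕ} (U : Set (Fin n → ℝ))
    (g : Fin n → Fin n → (Fin n → ℝ) → ℝ) : Prop :=
  (∀ a b, ContDiffOn ℝ (⊤ : ℕ∞) (g a b) U) ∧ (∀ a b, ∀ x ∈ U, g a b x = g b a x)

/-- The prolonged metrisability system (3.10) for `(g^{ab}, μ^a, ρ)`:
`∇_c g^{ab} = μ^a δ^b_c + μ^b δ^a_c`,
`∇_a μ^b = ρ δ^b_a - Σ_c P_{ac} g^{bc} - (1/n) Σ_{c,d} W^b_{cda} g^{cd}`,
`∇_a ρ = -2 Σ_b P_{ab} μ^b + (2/n) Σ_{b,c} Y_{abc} g^{bc}`. -/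
def ProlongedSys {n : ℕ} (U : Set (Fin n → ℝ))
    (Γ : Fin n → Fin n → Fin n → (Fin n → ℝ) → ℝ)
    (g : Fin n → Fin n → (Fin n → ℝ) → ℝ)
    (μ : Fin n → (Fin n → ℝ) → ℝ) (ρ : (Fin n → ℝ) → ℝ) : Prop :=
  (∀ a b c, ∀ x ∈ U, covUp2 Γ c a b g x = μ a x * kd b c + μ b x * kd a c) ∧
  (∀ a b, ∀ x ∈ U, covVec Γ a b μ x =
      ρ x * kd b a - (∑ c, schouten Γ a c x * g b c x)
        - (1/(n : ℝ)) * ∑ c, ∑ d, weyl Γ b c d a x * g c d x) ∧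
  (∀ a, ∀ x ∈ U, pd a ρ x =
      -2 * (∑ b, schouten Γ a b x * μ b x)
        + (2/(n : ℝ)) * ∑ b, ∑ c, cotton Γ a b c x * g b c x)

/-- The tensor `T_{[ed]}^{cb}{}_{af}` of Proposition 3.6 (eq. (3.12)). -/
def Ttensor {n : ℕ} (Γ : Fin n → Fin n → Fin n → (Fin n → ℝ) → ℝ)
    (e d c b a f : Fin n) (x : Fin n → ℝ) : ℝ :=
  (1/2) * ((kd c a * weyl Γ b f e d x + kd c f * weyl Γ b a e d x)/2)
  + (1/2) * ((kd b a * weyl Γ c f e d x + kd b f * weyl Γ c a e d x)/2)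
  + (1/(n : ℝ)) * ((((weyl Γ c a f e x + weyl Γ c f a e x)/2) * kd b d
      - ((weyl Γ c a f d x + weyl Γ c f a d x)/2) * kd b e)/2)
  + (1/(n : ℝ)) * ((((weyl Γ b a f e x + weyl Γ b f a e x)/2) * kd c d
      - ((weyl Γ b a f d x + weyl Γ b f a d x)/2) * kd c e)/2)

/-- The tensor `S_{[ae]}^b{}_{cd}` of Proposition 3.8. -/
def Stensor {n : ℕ} (Γ : Fin n → Fin n → Fin n → (Fin n → ℝ) → ℝ)
    (a e b c d : Fin n) (x : Fin n → ℝ) : ℝ :=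
  (((n : ℝ) - 2)/2) * ((cotton Γ e a c x * kd b d + cotton Γ e a d x * kd b c)/2)
  + (covWeyl Γ c b d e a x + covWeyl Γ d b c e a x)/2
  + (((covWeyl Γ a b c d e x + covWeyl Γ a b d c e x)/2)
      - ((covWeyl Γ e b c d a x + covWeyl Γ e b d c a x)/2))/2

/-- The tensor `U_{[ab]cd}` of Proposition 3.9. -/
def Utensor {n : ℕ} (Γ : Fin n → Fin n → Fin n → (Fin n → ℝ) → ℝ)
    (a b c d : Fin n) (x : Fin n → ℝ) : ℝ :=
  (((covCotton Γ a b c d x + covCotton Γ a b d c x)/2)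
      - ((covCotton Γ b a c d x + covCotton Γ b a d c x)/2))/2
  + ∑ e, (((weyl Γ e c d a x + weyl Γ e d c a x)/2) * schouten Γ b e x
      - ((weyl Γ e c d b x + weyl Γ e d c b x)/2) * schouten Γ a e x)/2

end


lemma sum_kd_mul {n : ℕ} (u : Fin n) (f : Fin n → ℝ) :
    ∑ e, kd u e * f e = f u := by simp [kd, ite_mul, Finset.sum_ite_eq]

lemma sum_kd_mul' {n : ℕ} (u : Fin n) (f : Fin n → ℝ) :
    ∑ e, kd e u * f e = f u := by simp [kd, ite_mul, Finset.sum_ite_eq']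

lemma sum_kd_diag {n : ℕ} : ∑ i : Fin n, kd i i = (n : ℝ) := by simp [kd]

set_option maxHeartbeats 2000000 in
lemma auxlem {n : ℕ} (G Gi R P Q : Fin n → Fin n → ℝ) (Rsc : ℝ) (hn : 3 ≤ n)
    (hGs : ∀ a b, G a b = G b a) (hGis : ∀ a b, Gi a b = Gi b a)
    (h1 : ∀ a b, ∑ k, G a k * Gi k b = kd a b)
    (h2 : ∀ a b, ∑ k, Gi a k * G k b = kd a b)
    (hRsc : Rsc = ∑ a, ∑ b, Gi a b * R a b)
    (hP : ∀ a b, P a b = (1/((n:ℝ)-1)) * ((R a b + R b a)/2)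
        - (1/((n:ℝ)+1)) * ((R a b - R b a)/2))
    (hQ : ∀ a b, Q a b = (1/((n:ℝ)-2)) * (R a b - Rsc * G a b / (2*((n:ℝ)-1)))) :
    (∀ a b c d : Fin n,
      -(kd a c * P d b) + kd a d * P c b + 2*kd a b*((P c d - P d c)/2)
        + kd a c * Q d b - kd a d * Q c b
        + (∑ e, G b d * Gi a e * Q e c) - (∑ e, G b c * Gi a e * Q e d) = 0)
    ↔ (∀ a b c d : Fin n,
      G a c * R d b - G a d * R c b + G a d * G c b * Rsc - G a c * G d b * Rsc
        + ((n:ℝ)-1)*(G b d * R a c - G b c * R a d) = 0) := by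
  have hn' : (3:ℝ) ≤ (n:ℝ) := by exact_mod_cast hn
  have hn1 : (n:ℝ) - 1 ≠ 0 := by linarith
  have hn2 : (n:ℝ) - 2 ≠ 0 := by linarith
  have hn3 : (n:ℝ) + 1 ≠ 0 := by linarith
  -- generic contraction helpers
  have hGG : ∀ (t : ℝ), (∑ i : Fin n, ∑ j, (Gi i j * G i j) * t) = (n:ℝ) * t := by
    intro t
    calc ∑ i : Fin n, ∑ j, (Gi i j * G i j) * t
        = ∑ i : Fin n, (∑ j, Gi i j * G j i) * t := by
          refine Finset.sum_congr rfl fun i _ => ?_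
          rw [Finset.sum_mul]
          exact Finset.sum_congr rfl fun j _ => by rw [hGs i j]
      _ = ∑ i : Fin n, kd i i * t := by
          refine Finset.sum_congr rfl fun i _ => ?_; rw [h2]
      _ = (n:ℝ) * t := by rw [← Finset.sum_mul, sum_kd_diag]
  have hcon1 : ∀ (u : Fin n) (f : Fin n → ℝ),
      (∑ i : Fin n, ∑ j, Gi i j * G i u * f j) = f u := by
    intro u f
    rw [Finset.sum_comm]
    calc ∑ j : Fin n, ∑ i, Gi i j * G i u * f j
        = ∑ j : Fin n, kd j u * f j := by
          refine Finset.sum_congr rfl fun j _ => ?_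
          have e1 : (∑ i, Gi i j * G i u * f j) = (∑ i, Gi j i * G i u) * f j := by
            rw [Finset.sum_mul]
            exact Finset.sum_congr rfl fun i _ => by rw [hGis i j]
          rw [e1, h2]
      _ = f u := sum_kd_mul' u f
  have hcon2 : ∀ (u : Fin n) (f : Fin n → ℝ),
      (∑ i : Fin n, ∑ j, Gi i j * G u j * f i) = f u := by
    intro u f
    calc ∑ i : Fin n, ∑ j, Gi i j * G u j * f i
        = ∑ i : Fin n, kd i u * f i := by
          refine Finset.sum_congr rfl fun i _ => ?_
          have e1 : (∑ j, Gi i j * G u j * f i) = (∑ j, Gi i j * G j u) * f i := by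
            rw [Finset.sum_mul]
            exact Finset.sum_congr rfl fun j _ => by rw [hGs u j]
          rw [e1, h2]
      _ = f u := sum_kd_mul' u f
  have hRtr : ∀ (t : ℝ), (∑ i : Fin n, ∑ j, (Gi i j * R i j) * t) = Rsc * t := by
    intro t
    have e1 : (∑ i : Fin n, ∑ j, (Gi i j * R i j) * t)
        = (∑ i : Fin n, ∑ j, Gi i j * R i j) * t := by
      rw [Finset.sum_mul]
      exact Finset.sum_congr rfl fun i _ => by rw [Finset.sum_mul]
    rw [e1, ← hRsc]
  have hQtr : ∀ (t : ℝ), (∑ i : Fin n, ∑ j, (Gi i j * Q i j) * t)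
      = (Rsc * (1/((n:ℝ)-2)) - (n:ℝ) * (Rsc/(2*((n:ℝ)-1)*((n:ℝ)-2)))) * t := by
    intro t
    calc ∑ i : Fin n, ∑ j, (Gi i j * Q i j) * t
        = ∑ i : Fin n, ∑ j, ((Gi i j * R i j) * ((1/((n:ℝ)-2)) * t)
            - (Gi i j * G i j) * ((Rsc/(2*((n:ℝ)-1)*((n:ℝ)-2))) * t)) := by
          refine Finset.sum_congr rfl fun i _ => Finset.sum_congr rfl fun j _ => ?_
          rw [hQ]; field_simp
      _ = (∑ i : Fin n, ∑ j, (Gi i j * R i j) * ((1/((n:ℝ)-2)) * t))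
            - (∑ i : Fin n, ∑ j, (Gi i j * G i j) * ((Rsc/(2*((n:ℝ)-1)*((n:ℝ)-2))) * t)) := by
          simp only [Finset.sum_sub_distrib]
      _ = Rsc * ((1/((n:ℝ)-2)) * t) - (n:ℝ) * ((Rsc/(2*((n:ℝ)-1)*((n:ℝ)-2))) * t) := by
          rw [hRtr, hGG]
      _ = _ := by ring
  have hQsum : ∀ (u w : Fin n), (∑ e, Gi u e * Q e w)
      = (∑ e, Gi u e * R e w) * (1/((n:ℝ)-2))
        - kd u w * (Rsc/(2*((n:ℝ)-1)*((n:ℝ)-2))) := by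
    intro u w
    calc ∑ e, Gi u e * Q e w
        = ∑ e, ((Gi u e * R e w) * (1/((n:ℝ)-2))
            - (Gi u e * G e w) * (Rsc/(2*((n:ℝ)-1)*((n:ℝ)-2)))) := by
          refine Finset.sum_congr rfl fun e _ => ?_
          rw [hQ]; field_simp
      _ = (∑ e, Gi u e * R e w) * (1/((n:ℝ)-2))
            - (∑ e, Gi u e * G e w) * (Rsc/(2*((n:ℝ)-1)*((n:ℝ)-2))) := by
          rw [Finset.sum_sub_distrib, Finset.sum_mul, Finset.sum_mul]
      _ = _ := by rw [h2]
  constructor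
  · -- forward
    intro hL
    have hF : ∀ f b c d : Fin n,
        -(G f c * P d b) + G f d * P c b + G f b * (P c d - P d c)
          + G f c * Q d b - G f d * Q c b + G b d * Q f c - G b c * Q f d = 0 := by
      intro f b c d
      have hs1 : ∀ (u v w : Fin n),
          (∑ a, G f a * (∑ e, G u v * Gi a e * Q e w)) = G u v * Q f w := by
        intro u v w
        calc ∑ a, G f a * (∑ e, G u v * Gi a e * Q e w)
            = ∑ a, ∑ e, (G f a * Gi a e) * (G u v * Q e w) := by
              refine Finset.sum_congr rfl fun a _ => ?_
              rw [Finset.mul_sum]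
              exact Finset.sum_congr rfl fun e _ => by ring
          _ = ∑ e, ∑ a, (G f a * Gi a e) * (G u v * Q e w) := Finset.sum_comm
          _ = ∑ e, kd f e * (G u v * Q e w) := by
              refine Finset.sum_congr rfl fun e _ => ?_
              rw [← Finset.sum_mul, h1]
          _ = G u v * Q f w := sum_kd_mul f _
      have hz : (∑ a, G f a * (-(kd a c * P d b) + kd a d * P c b
            + 2*kd a b*((P c d - P d c)/2) + kd a c * Q d b - kd a d * Q c b
            + (∑ e, G b d * Gi a e * Q e c) - (∑ e, G b c * Gi a e * Q e d))) = 0 :=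
        Finset.sum_eq_zero fun a _ => by rw [hL a b c d, mul_zero]
      have hval : (∑ a, G f a * (-(kd a c * P d b) + kd a d * P c b
            + 2*kd a b*((P c d - P d c)/2) + kd a c * Q d b - kd a d * Q c b
            + (∑ e, G b d * Gi a e * Q e c) - (∑ e, G b c * Gi a e * Q e d)))
          = -(G f c * P d b) + G f d * P c b + G f b * (P c d - P d c)
            + G f c * Q d b - G f d * Q c b + G b d * Q f c - G b c * Q f d := by
        calc ∑ a, G f a * (-(kd a c * P d b) + kd a d * P c b
              + 2*kd a b*((P c d - P d c)/2) + kd a c * Q d b - kd a d * Q c b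
              + (∑ e, G b d * Gi a e * Q e c) - (∑ e, G b c * Gi a e * Q e d))
            = ∑ a, (kd a c * (G f a * (Q d b - P d b))
                + kd a d * (G f a * (P c b - Q c b))
                + kd a b * (G f a * (P c d - P d c))
                + G f a * (∑ e, G b d * Gi a e * Q e c)
                - G f a * (∑ e, G b c * Gi a e * Q e d)) := by
              refine Finset.sum_congr rfl fun a _ => ?_; ring
          _ = (∑ a, kd a c * (G f a * (Q d b - P d b)))
                + (∑ a, kd a d * (G f a * (P c b - Q c b)))
                + (∑ a, kd a b * (G f a * (P c d - P d c)))
                + (∑ a, G f a * (∑ e, G b d * Gi a e * Q e c))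
                - (∑ a, G f a * (∑ e, G b c * Gi a e * Q e d)) := by
              simp only [Finset.sum_add_distrib, Finset.sum_sub_distrib]
          _ = G f c * (Q d b - P d b) + G f d * (P c b - Q c b)
                + G f b * (P c d - P d c) + G b d * Q f c - G b c * Q f d := by
              rw [sum_kd_mul' c (fun a => G f a * (Q d b - P d b)),
                sum_kd_mul' d (fun a => G f a * (P c b - Q c b)),
                sum_kd_mul' b (fun a => G f a * (P c d - P d c)), hs1 b d c, hs1 b c d]
          _ = _ := by ring
      rw [← hval]; exact hz
    have hsym : ∀ u v : Fin n, R u v = R v u := by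
      intro u v
      have hz : (∑ i : Fin n, ∑ j, Gi i j * (-(G i j * P u v) + G i u * P j v
            + G i v * (P j u - P u j) + G i j * Q u v - G i u * Q j v
            + G v u * Q i j - G v j * Q i u)) = 0 :=
        Finset.sum_eq_zero fun i _ => Finset.sum_eq_zero fun j _ => by
          rw [hF i v j u, mul_zero]
      have hval : (∑ i : Fin n, ∑ j, Gi i j * (-(G i j * P u v) + G i u * P j v
            + G i v * (P j u - P u j) + G i j * Q u v - G i u * Q j v
            + G v u * Q i j - G v j * Q i u))
          = (((n:ℝ)-1)/((n:ℝ)-2)) * (R u v - R v u) := by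
        calc ∑ i : Fin n, ∑ j, Gi i j * (-(G i j * P u v) + G i u * P j v
              + G i v * (P j u - P u j) + G i j * Q u v - G i u * Q j v
              + G v u * Q i j - G v j * Q i u)
            = ∑ i : Fin n, ∑ j, ((Gi i j * G i j) * (Q u v - P u v)
                + Gi i j * G i u * (P j v - Q j v)
                + Gi i j * G i v * (P j u - P u j)
                + (Gi i j * Q i j) * (G v u)
                - Gi i j * G v j * Q i u) := by
              refine Finset.sum_congr rfl fun i _ => Finset.sum_congr rfl fun j _ => ?_
              ring
          _ = (∑ i : Fin n, ∑ j, (Gi i j * G i j) * (Q u v - P u v))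
                + (∑ i : Fin n, ∑ j, Gi i j * G i u * (P j v - Q j v))
                + (∑ i : Fin n, ∑ j, Gi i j * G i v * (P j u - P u j))
                + (∑ i : Fin n, ∑ j, (Gi i j * Q i j) * (G v u))
                - (∑ i : Fin n, ∑ j, Gi i j * G v j * Q i u) := by
              simp only [Finset.sum_add_distrib, Finset.sum_sub_distrib]
          _ = (n:ℝ) * (Q u v - P u v) + (P u v - Q u v) + (P v u - P u v)
                + (Rsc * (1/((n:ℝ)-2)) - (n:ℝ) * (Rsc/(2*((n:ℝ)-1)*((n:ℝ)-2)))) * (G v u)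
                - Q v u := by
              rw [hGG, hcon1 u (fun j => P j v - Q j v),
                hcon1 v (fun j => P j u - P u j), hQtr, hcon2 v (fun i => Q i u)]
          _ = _ := by
              rw [hP u v, hP v u, hQ u v, hQ v u, hGs u v]
              field_simp
              ring
      have h0 : (((n:ℝ)-1)/((n:ℝ)-2)) * (R u v - R v u) = 0 := by rw [← hval]; exact hz
      have h1' : ((n:ℝ)-1)/((n:ℝ)-2) ≠ 0 := div_ne_zero hn1 hn2
      have := (mul_eq_zero.mp h0).resolve_left h1'
      linarith
    intro a b c d
    have key : G a c * R d b - G a d * R c b + G a d * G c b * Rsc - G a c * G d b * Rsc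
          + ((n:ℝ)-1)*(G b d * R a c - G b c * R a d)
        = (((n:ℝ)-1)*((n:ℝ)-2)) * (-(G a c * P d b) + G a d * P c b
            + G a b * (P c d - P d c) + G a c * Q d b - G a d * Q c b
            + G b d * Q a c - G b c * Q a d) := by
      rw [hP d b, hP c b, hP c d, hP d c, hQ d b, hQ c b, hQ a c, hQ a d,
        hsym b d, hsym b c, hsym d c, hGs b d, hGs b c]
      field_simp
      ring
    rw [key, hF a b c d, mul_zero]
  · -- backward
    intro hR
    have hsym : ∀ u v : Fin n, R u v = R v u := by
      intro u v
      have hz : (∑ i : Fin n, ∑ j, Gi i j * (G i j * R u v - G i u * R j v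
            + G i u * G j v * Rsc - G i j * G u v * Rsc
            + ((n:ℝ)-1)*(G v u * R i j - G v j * R i u))) = 0 :=
        Finset.sum_eq_zero fun i _ => Finset.sum_eq_zero fun j _ => by
          rw [hR i v j u, mul_zero]
      have hval : (∑ i : Fin n, ∑ j, Gi i j * (G i j * R u v - G i u * R j v
            + G i u * G j v * Rsc - G i j * G u v * Rsc
            + ((n:ℝ)-1)*(G v u * R i j - G v j * R i u)))
          = ((n:ℝ)-1) * (R u v - R v u) := by
        calc ∑ i : Fin n, ∑ j, Gi i j * (G i j * R u v - G i u * R j v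
              + G i u * G j v * Rsc - G i j * G u v * Rsc
              + ((n:ℝ)-1)*(G v u * R i j - G v j * R i u))
            = ∑ i : Fin n, ∑ j, ((Gi i j * G i j) * (R u v - G u v * Rsc)
                + Gi i j * G i u * (G j v * Rsc - R j v)
                + (Gi i j * R i j) * (((n:ℝ)-1) * G v u)
                - Gi i j * G v j * (((n:ℝ)-1) * R i u)) := by
              refine Finset.sum_congr rfl fun i _ => Finset.sum_congr rfl fun j _ => ?_
              ring
          _ = (∑ i : Fin n, ∑ j, (Gi i j * G i j) * (R u v - G u v * Rsc))
                + (∑ i : Fin n, ∑ j, Gi i j * G i u * (G j v * Rsc - R j v))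
                + (∑ i : Fin n, ∑ j, (Gi i j * R i j) * (((n:ℝ)-1) * G v u))
                - (∑ i : Fin n, ∑ j, Gi i j * G v j * (((n:ℝ)-1) * R i u)) := by
              simp only [Finset.sum_add_distrib, Finset.sum_sub_distrib]
          _ = (n:ℝ) * (R u v - G u v * Rsc) + (G u v * Rsc - R u v)
                + Rsc * (((n:ℝ)-1) * G v u) - ((n:ℝ)-1) * R v u := by
              rw [hGG, hcon1 u (fun j => G j v * Rsc - R j v), hRtr,
                hcon2 v (fun i => ((n:ℝ)-1) * R i u)]
          _ = _ := by rw [hGs u v]; ring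
      have h0 : ((n:ℝ)-1) * (R u v - R v u) = 0 := by rw [← hval]; exact hz
      have := (mul_eq_zero.mp h0).resolve_left hn1
      linarith
    intro a b c d
    have hz : (∑ f, Gi a f * (G f c * R d b - G f d * R c b + G f d * G c b * Rsc
          - G f c * G d b * Rsc + ((n:ℝ)-1)*(G b d * R f c - G b c * R f d))) = 0 :=
      Finset.sum_eq_zero fun f _ => by rw [hR f b c d, mul_zero]
    have hcontr : (∑ f, Gi a f * (G f c * R d b - G f d * R c b + G f d * G c b * Rsc
          - G f c * G d b * Rsc + ((n:ℝ)-1)*(G b d * R f c - G b c * R f d)))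
        = kd a c * (R d b - G d b * Rsc) - kd a d * (R c b - G c b * Rsc)
          + ((n:ℝ)-1) * G b d * (∑ e, Gi a e * R e c)
          - ((n:ℝ)-1) * G b c * (∑ e, Gi a e * R e d) := by
      calc ∑ f, Gi a f * (G f c * R d b - G f d * R c b + G f d * G c b * Rsc
            - G f c * G d b * Rsc + ((n:ℝ)-1)*(G b d * R f c - G b c * R f d))
          = ∑ f, ((Gi a f * G f c) * (R d b - G d b * Rsc)
              - (Gi a f * G f d) * (R c b - G c b * Rsc)
              + (((n:ℝ)-1) * G b d) * (Gi a f * R f c)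
              - (((n:ℝ)-1) * G b c) * (Gi a f * R f d)) := by
            refine Finset.sum_congr rfl fun f _ => ?_; ring
        _ = (∑ f, Gi a f * G f c) * (R d b - G d b * Rsc)
              - (∑ f, Gi a f * G f d) * (R c b - G c b * Rsc)
              + (((n:ℝ)-1) * G b d) * (∑ f, Gi a f * R f c)
              - (((n:ℝ)-1) * G b c) * (∑ f, Gi a f * R f d) := by
            simp only [Finset.sum_add_distrib, Finset.sum_sub_distrib, Finset.sum_mul,
              Finset.mul_sum]
        _ = _ := by rw [h2, h2]
    have hLval : -(kd a c * P d b) + kd a d * P c b + 2*kd a b*((P c d - P d c)/2)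
          + kd a c * Q d b - kd a d * Q c b
          + (∑ e, G b d * Gi a e * Q e c) - (∑ e, G b c * Gi a e * Q e d)
        = (1/(((n:ℝ)-1)*((n:ℝ)-2)))
            * (kd a c * (R d b - G d b * Rsc) - kd a d * (R c b - G c b * Rsc)
              + ((n:ℝ)-1) * G b d * (∑ e, Gi a e * R e c)
              - ((n:ℝ)-1) * G b c * (∑ e, Gi a e * R e d)) := by
      have e1 : (∑ e, G b d * Gi a e * Q e c) = G b d * (∑ e, Gi a e * Q e c) := by
        rw [Finset.mul_sum]; exact Finset.sum_congr rfl fun e _ => by ring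
      have e2 : (∑ e, G b c * Gi a e * Q e d) = G b c * (∑ e, Gi a e * Q e d) := by
        rw [Finset.mul_sum]; exact Finset.sum_congr rfl fun e _ => by ring
      rw [e1, e2, hQsum a c, hQsum a d, hP d b, hP c b, hP c d, hP d c,
        hQ d b, hQ c b, hsym b d, hsym b c, hsym d c, hGs b d, hGs b c]
      field_simp
      ring
    rw [hLval, ← hcontr, hz, mul_zero]

lemma sum_dd {n : ℕ} (R : Fin n → Fin n → ℝ) (u v : Fin n) (t : ℝ) :
    (∑ e : Fin n, ∑ f, kd e u * (kd f v * (t * R e f))) = t * R u v := by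
  calc ∑ e : Fin n, ∑ f, kd e u * (kd f v * (t * R e f))
      = ∑ e : Fin n, kd e u * (t * R e v) := by
        refine Finset.sum_congr rfl fun e _ => ?_
        rw [← Finset.mul_sum, sum_kd_mul' v (fun f => t * R e f)]
    _ = t * R u v := sum_kd_mul' u (fun e => t * R e v)


set_option maxHeartbeats 1000000 in
/-- For `n ≥ 3` and a metric `ĝ` with Levi-Civita connection `Γ`, the
projective Weyl tensor equals the metric (conformal) Weyl tensor at every point of `U`
iff `Σ_{e,f} M_{abcd}^{ef} R_{ef} = 0` for all `a,b,c,d` (Proposition 2.5). -/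
theorem projective_weyl_eq_metric_weyl_iff {n : ℕ} (hn : 3 ≤ n)
    (U : Set (Fin n → ℝ)) (hUo : IsOpen U) (hUne : U.Nonempty)
    (g : Fin n → Fin n → (Fin n → ℝ) → ℝ) (hg : IsMetric U g) :
    (∀ x ∈ U, ∀ a b c d : Fin n,
        weyl (levicivita g) a b c d x = lcWeyl g a b c d x) ↔
    (∀ x ∈ U, ∀ a b c d : Fin n,
        (∑ e, ∑ f,
          (g a c x * kd e d * kd f b - g a d x * kd e c * kd f b
            + g a d x * g c b x * minv g e f x - g a c x * g d b x * minv g e f x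
            + ((n : ℝ) - 1) * (g b d x * kd e a * kd f c - g b c x * kd e a * kd f d))
          * ricci (levicivita g) e f x) = 0) := by
  obtain ⟨hg1, hg2, hg3⟩ := hg
  have main : ∀ x ∈ U,
      ((∀ a b c d : Fin n, weyl (levicivita g) a b c d x = lcWeyl g a b c d x) ↔
        (∀ a b c d : Fin n,
          (∑ e, ∑ f,
            (g a c x * kd e d * kd f b - g a d x * kd e c * kd f b
              + g a d x * g c b x * minv g e f x - g a c x * g d b x * minv g e f x
              + ((n : ℝ) - 1) * (g b d x * kd e a * kd f c - g b c x * kd e a * kd f d))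
            * ricci (levicivita g) e f x) = 0)) := by
    intro x hx
    have hdet : (Matrix.of fun a b => g a b x).det ≠ 0 := hg3 x hx
    have hMt : Matrix.transpose (Matrix.of fun a b => g a b x)
        = (Matrix.of fun a b => g a b x) := by
      ext a b
      exact (hg2 a b x hx).symm
    have hGs : ∀ a b, g a b x = g b a x := fun a b => hg2 a b x hx
    have hGis : ∀ a b, minv g a b x = minv g b a x := by
      intro a b
      calc minv g a b x = (Matrix.of fun a b => g a b x)⁻¹ a b := rfl
        _ = (Matrix.transpose (Matrix.of fun a b => g a b x))⁻¹ a b := by rw [hMt]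
        _ = Matrix.transpose ((Matrix.of fun a b => g a b x)⁻¹) a b := by
              rw [Matrix.transpose_nonsing_inv]
        _ = minv g b a x := rfl
    have h1 : ∀ a b, (∑ k, g a k x * minv g k b x) = kd a b := by
      intro a b
      have hm := Matrix.mul_nonsing_inv (Matrix.of fun a b => g a b x)
        (isUnit_iff_ne_zero.mpr hdet)
      have h2' : ((Matrix.of fun a b => g a b x) * (Matrix.of fun a b => g a b x)⁻¹) a b
          = (1 : Matrix (Fin n) (Fin n) ℝ) a b := by rw [hm]
      rw [Matrix.mul_apply, Matrix.one_apply] at h2'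
      exact h2'
    have h2 : ∀ a b, (∑ k, minv g a k x * g k b x) = kd a b := by
      intro a b
      have hm := Matrix.nonsing_inv_mul (Matrix.of fun a b => g a b x)
        (isUnit_iff_ne_zero.mpr hdet)
      have h2' : ((Matrix.of fun a b => g a b x)⁻¹ * (Matrix.of fun a b => g a b x)) a b
          = (1 : Matrix (Fin n) (Fin n) ℝ) a b := by rw [hm]
      rw [Matrix.mul_apply, Matrix.one_apply] at h2'
      exact h2'
    have A1 : (∀ a b c d : Fin n,
        -(kd a c * schouten (levicivita g) d b x) + kd a d * schouten (levicivita g) c b x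
          + 2*kd a b*((schouten (levicivita g) c d x - schouten (levicivita g) d c x)/2)
          + kd a c * lcSchouten g d b x - kd a d * lcSchouten g c b x
          + (∑ e, g b d x * minv g a e x * lcSchouten g e c x)
          - (∑ e, g b c x * minv g a e x * lcSchouten g e d x) = 0)
        ↔ (∀ a b c d : Fin n,
        g a c x * ricci (levicivita g) d b x - g a d x * ricci (levicivita g) c b x
          + g a d x * g c b x * ricciScalar g x - g a c x * g d b x * ricciScalar g x
          + ((n:ℝ)-1)*(g b d x * ricci (levicivita g) a c x
            - g b c x * ricci (levicivita g) a d x) = 0) :=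
      auxlem (fun a b => g a b x) (fun a b => minv g a b x)
        (fun a b => ricci (levicivita g) a b x)
        (fun a b => schouten (levicivita g) a b x)
        (fun a b => lcSchouten g a b x) (ricciScalar g x) hn hGs hGis h1 h2 rfl
        (fun a b => rfl) (fun a b => rfl)
    have hdiff : ∀ a b c d : Fin n,
        weyl (levicivita g) a b c d x - lcWeyl g a b c d x =
        -(kd a c * schouten (levicivita g) d b x) + kd a d * schouten (levicivita g) c b x
          + 2*kd a b*((schouten (levicivita g) c d x - schouten (levicivita g) d c x)/2)
          + kd a c * lcSchouten g d b x - kd a d * lcSchouten g c b x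
          + (∑ e, g b d x * minv g a e x * lcSchouten g e c x)
          - (∑ e, g b c x * minv g a e x * lcSchouten g e d x) := by
      intro a b c d
      simp only [weyl, lcWeyl]
      ring
    have hsum : ∀ a b c d : Fin n,
        (∑ e, ∑ f,
          (g a c x * kd e d * kd f b - g a d x * kd e c * kd f b
            + g a d x * g c b x * minv g e f x - g a c x * g d b x * minv g e f x
            + ((n : ℝ) - 1) * (g b d x * kd e a * kd f c - g b c x * kd e a * kd f d))
          * ricci (levicivita g) e f x)
        = g a c x * ricci (levicivita g) d b x - g a d x * ricci (levicivita g) c b x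
          + g a d x * g c b x * ricciScalar g x - g a c x * g d b x * ricciScalar g x
          + ((n:ℝ)-1)*(g b d x * ricci (levicivita g) a c x
            - g b c x * ricci (levicivita g) a d x) := by
      intro a b c d
      have hmul : ∀ (t : ℝ),
          (∑ e : Fin n, ∑ f, t * (minv g e f x * ricci (levicivita g) e f x))
            = t * ricciScalar g x := by
        intro t
        simp only [← Finset.mul_sum]
        rfl
      calc (∑ e, ∑ f,
          (g a c x * kd e d * kd f b - g a d x * kd e c * kd f b
            + g a d x * g c b x * minv g e f x - g a c x * g d b x * minv g e f x
            + ((n : ℝ) - 1) * (g b d x * kd e a * kd f c - g b c x * kd e a * kd f d))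
          * ricci (levicivita g) e f x)
          = ∑ e, ∑ f,
            (kd e d * (kd f b * (g a c x * ricci (levicivita g) e f x))
              - kd e c * (kd f b * (g a d x * ricci (levicivita g) e f x))
              + (g a d x * g c b x) * (minv g e f x * ricci (levicivita g) e f x)
              - (g a c x * g d b x) * (minv g e f x * ricci (levicivita g) e f x)
              + kd e a * (kd f c * ((((n:ℝ)-1) * g b d x) * ricci (levicivita g) e f x))
              - kd e a * (kd f d * ((((n:ℝ)-1) * g b c x) * ricci (levicivita g) e f x))) := by
            refine Finset.sum_congr rfl fun e _ => Finset.sum_congr rfl fun f _ => ?_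
            ring
        _ = (∑ e : Fin n, ∑ f, kd e d * (kd f b * (g a c x * ricci (levicivita g) e f x)))
              - (∑ e : Fin n, ∑ f, kd e c * (kd f b * (g a d x * ricci (levicivita g) e f x)))
              + (∑ e : Fin n, ∑ f, (g a d x * g c b x) * (minv g e f x * ricci (levicivita g) e f x))
              - (∑ e : Fin n, ∑ f, (g a c x * g d b x) * (minv g e f x * ricci (levicivita g) e f x))
              + (∑ e : Fin n, ∑ f, kd e a * (kd f c * ((((n:ℝ)-1) * g b d x) * ricci (levicivita g) e f x)))
              - (∑ e : Fin n, ∑ f, kd e a * (kd f d * ((((n:ℝ)-1) * g b c x) * ricci (levicivita g) e f x))) := by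
            simp only [Finset.sum_add_distrib, Finset.sum_sub_distrib]
        _ = g a c x * ricci (levicivita g) d b x
              - g a d x * ricci (levicivita g) c b x
              + (g a d x * g c b x) * ricciScalar g x
              - (g a c x * g d b x) * ricciScalar g x
              + (((n:ℝ)-1) * g b d x) * ricci (levicivita g) a c x
              - (((n:ℝ)-1) * g b c x) * ricci (levicivita g) a d x := by
            rw [sum_dd _ d b, sum_dd _ c b, sum_dd _ a c, sum_dd _ a d, hmul, hmul]
        _ = _ := by ring
    constructor
    · intro hw
      have hl : ∀ a b c d : Fin n,
          -(kd a c * schouten (levicivita g) d b x) + kd a d * schouten (levicivita g) c b x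
            + 2*kd a b*((schouten (levicivita g) c d x - schouten (levicivita g) d c x)/2)
            + kd a c * lcSchouten g d b x - kd a d * lcSchouten g c b x
            + (∑ e, g b d x * minv g a e x * lcSchouten g e c x)
            - (∑ e, g b c x * minv g a e x * lcSchouten g e d x) = 0 := by
        intro a b c d
        rw [← hdiff a b c d, hw a b c d, sub_self]
      intro a b c d
      rw [hsum a b c d]
      exact A1.mp hl a b c d
    · intro hr
      have hl := A1.mpr (by
        intro a b c d
        rw [← hsum a b c d]
        exact hr a b c d)
      intro a b c d
      have h0 := hl a b c d
      rw [← hdiff a b c d] at h0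
      exact sub_eq_zero.mp h0
  constructor
  · intro h x hx
    exact (main x hx).mp (h x hx)
  · intro h x hx
    exact (main x hx).mpr (h x hx)
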